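/- Suppose n, k, m are positive integers with m+1 ≤ k−1 ≤ m+n, p > 0, ℓ < k, μ > 0, and p^{k−m−1} C(n, k−m−1) − μ p^{ℓ−m−1} C(n, ℓ−m−1) > 0 (with the convention that the second term is 0 if ℓ−m−1 < 0). Define F_m(x,y) := G_p^{0,n,k−m}(x,y) − μ G_p^{0,n,ℓ−m}(x,y), with G_p^{0,n,j}(x,y) the t^j-coefficient of ∫_0^{x+ty} (1+tp+s)^n ds (and G := 0 if j < 0). Then ∂F_m/∂y (0,0) = p^{k−m−1} C(n,k−m−1) − μ p^{ℓ−m−1} C(n,ℓ−m−1) > 0, and hence by the implicit function theorem there exist ε > 0 and a smooth function y_m : [0,ε) → ℝ with F_m(x, y_m(x)) = 0 and y_m(0) = 0. -/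

import Mathlib

open Nat intervalIntegral

/-- The Fang–Lai polynomial G_p^{m,n,j}(x,y). -/
noncomputable def G (m n j : ℕ) (p x y : ℝ) : ℝ :=
  iteratedDeriv j (fun t => ∫ s in (0:ℝ)..(x + t * y), s ^ m * (1 + t * p + s) ^ n) 0
    / (Nat.factorial j : ℝ)

lemma hasDerivAt_affine_pow (a b : ℝ) (M : ℕ) (t : ℝ) :
    HasDerivAt (fun t : ℝ => (a + b * t) ^ M) ((M : ℝ) * (a + b * t) ^ (M - 1) * b) t := by
  have h : HasDerivAt (fun t : ℝ => a + b * t) b t := by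
    simpa using ((hasDerivAt_id t).const_mul b).const_add a
  exact h.pow M

lemma iterKey (c a b a' b' : ℝ) (N : ℕ) : ∀ j : ℕ,
    iteratedDeriv j (fun t => c * (a + b * t) ^ N - c * (a' + b' * t) ^ N)
      = fun t => c * ((N.descFactorial j : ℝ) * b ^ j * (a + b * t) ^ (N - j))
          - c * ((N.descFactorial j : ℝ) * b' ^ j * (a' + b' * t) ^ (N - j)) := by
  intro j
  induction j with
  | zero => simp [iteratedDeriv_zero]
  | succ j ih =>
    rw [iteratedDeriv_succ, ih]
    funext t
    have h1 := ((hasDerivAt_affine_pow a b (N - j) t).const_mul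
      (c * ((N.descFactorial j : ℝ) * b ^ j)))
    have h2 := ((hasDerivAt_affine_pow a' b' (N - j) t).const_mul
      (c * ((N.descFactorial j : ℝ) * b' ^ j)))
    have h := (h1.sub h2).deriv
    have hfun : (fun t => c * ((N.descFactorial j : ℝ) * b ^ j * (a + b * t) ^ (N - j))
          - c * ((N.descFactorial j : ℝ) * b' ^ j * (a' + b' * t) ^ (N - j)))
        = fun t => c * ((N.descFactorial j : ℝ) * b ^ j) * (a + b * t) ^ (N - j)
          - c * ((N.descFactorial j : ℝ) * b' ^ j) * (a' + b' * t) ^ (N - j) := by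
      funext s; ring
    rw [hfun]; refine h.trans ?_
    have hcast : ((N.descFactorial (j + 1) : ℝ)) = ((N - j : ℕ) : ℝ) * (N.descFactorial j : ℝ) := by
      exact_mod_cast congrArg (Nat.cast (R := ℝ)) (Nat.descFactorial_succ N j)
    rw [Nat.sub_sub] at *
    rw [hcast]
    ring

lemma G_zero_eq (n j : ℕ) (p x y : ℝ) :
    G 0 n j p x y = ((n+1).descFactorial j : ℝ) * ((p+y)^j * (1+x)^(n+1-j) - p^j)
      / (((n:ℝ)+1) * (j !)) := by
  have hfun : (fun t => ∫ s in (0:ℝ)..(x + t * y), s ^ 0 * (1 + t * p + s) ^ n)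
      = fun t => (1/((n:ℝ)+1)) * ((1 + x) + (p + y) * t) ^ (n+1)
          - (1/((n:ℝ)+1)) * ((1:ℝ) + p * t) ^ (n+1) := by
    funext t
    simp only [pow_zero, one_mul]
    rw [show (fun s : ℝ => (1 + t * p + s)^n)
        = (fun s : ℝ => ((fun r : ℝ => r ^ n) ((1 + t * p) + s))) from rfl]
    rw [integral_comp_add_left (fun r : ℝ => r ^ n) (1 + t * p), integral_pow]
    push_cast
    ring
  have hne : ((n:ℝ) + 1) ≠ 0 := by positivity
  have hfac : ((j !) : ℝ) ≠ 0 := by exact_mod_cast (Nat.factorial_ne_zero j)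
  rw [G, hfun, iterKey]
  simp only [mul_zero, add_zero, one_pow, mul_one]
  field_simp

lemma coeff_eq (n j : ℕ) (hj : 1 ≤ j) :
    ((n+1).descFactorial j : ℝ) / (((n:ℝ)+1) * (j !)) * (j : ℝ) = (n.choose (j-1) : ℝ) := by
  obtain ⟨i, rfl⟩ := Nat.exists_eq_add_of_le hj
  simp only [Nat.add_sub_cancel_left]
  rw [show 1 + i = i + 1 by ring]
  rw [Nat.succ_descFactorial_succ, Nat.descFactorial_eq_factorial_mul_choose, Nat.factorial_succ]
  have h1 : ((i !) : ℝ) ≠ 0 := by exact_mod_cast i.factorial_ne_zero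
  have h2 : ((n:ℝ) + 1) ≠ 0 := by positivity
  push_cast
  field_simp

/-- Initial step of the induction in the case m+1 ≤ k−1: ∂F_m/∂y(0,0) equals
the numerical quantity p^{k−m−1}C(n,k−m−1) − μ p^{ℓ−m−1}C(n,ℓ−m−1) > 0, and
the implicit function theorem yields a smooth local solution of
F_m(x, y_m(x)) = 0 with y_m(0) = 0. -/
theorem initial_step_implicit_function (m n k ℓ : ℕ) (hn : 1 ≤ n)
    (hmk : m + 1 ≤ k - 1) (hkn : k - 1 ≤ m + n) (hℓk : ℓ < k)
    (p μ : ℝ) (hp : 0 < p) (hμ : 0 < μ)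
    (F : ℝ → ℝ → ℝ)
    (hF : ∀ x y, F x y
      = G 0 n (k - m) p x y - μ * (if m ≤ ℓ then G 0 n (ℓ - m) p x y else 0))
    (hnum : 0 < p ^ (k - m - 1) * (n.choose (k - m - 1) : ℝ)
        - (if m + 1 ≤ ℓ then μ * p ^ (ℓ - m - 1) * (n.choose (ℓ - m - 1) : ℝ) else 0)) :
    deriv (fun y => F 0 y) 0
      = p ^ (k - m - 1) * (n.choose (k - m - 1) : ℝ)
        - (if m + 1 ≤ ℓ then μ * p ^ (ℓ - m - 1) * (n.choose (ℓ - m - 1) : ℝ) else 0)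
    ∧ ∃ ε > 0, ∃ y : ℝ → ℝ, ContDiffOn ℝ (⊤ : ℕ∞) y (Set.Ico 0 ε) ∧ y 0 = 0 ∧
        ∀ x ∈ Set.Ico (0:ℝ) ε, F x (y x) = 0 := by
  have hk2 : m + 2 ≤ k := by omega
  set j1 : ℕ := k - m with hj1
  set j2 : ℕ := ℓ - m with hj2
  have hj1ge : 1 ≤ j1 := by omega
  set A : ℕ := n + 1 - j1 with hA
  set B : ℕ := n + 1 - j2 with hB
  set c1 : ℝ := ((n+1).descFactorial j1 : ℝ) / (((n:ℝ)+1) * (j1 !)) with hc1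
  set c2 : ℝ := if m ≤ ℓ then
      μ * (((n+1).descFactorial j2 : ℝ) / (((n:ℝ)+1) * (j2 !))) else 0 with hc2
  -- F as an explicit polynomial
  have hFeq : ∀ x y : ℝ, F x y
      = c1 * ((p+y)^j1 * (1+x)^A - p^j1) - c2 * ((p+y)^j2 * (1+x)^B - p^j2) := by
    intro x y
    rw [hF, G_zero_eq]
    by_cases hml : m ≤ ℓ
    · rw [if_pos hml, G_zero_eq, hc1, hc2, if_pos hml]
      ring
    · rw [if_neg hml, hc1, hc2, if_neg hml]
      ring
  -- the value of the y-partial derivative at the origin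
  set d' : ℝ := c1 * ((j1:ℝ) * p^(j1-1)) - c2 * ((j2:ℝ) * p^(j2-1)) with hd'
  have hd'val : d' = p ^ (k - m - 1) * (n.choose (k - m - 1) : ℝ)
      - (if m + 1 ≤ ℓ then μ * p ^ (ℓ - m - 1) * (n.choose (ℓ - m - 1) : ℝ) else 0) := by
    have h1 : c1 * ((j1:ℝ) * p^(j1-1)) = p ^ (k - m - 1) * (n.choose (k - m - 1) : ℝ) := by
      rw [hc1, ← mul_assoc, coeff_eq n j1 hj1ge]
      rw [show j1 - 1 = k - m - 1 from rfl]
      ring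
    rw [hd', h1]
    congr 1
    by_cases hml1 : m + 1 ≤ ℓ
    · have hml : m ≤ ℓ := by omega
      have hj2ge : 1 ≤ j2 := by omega
      rw [if_pos hml1, hc2, if_pos hml, mul_assoc, ← mul_assoc _ (j2:ℝ) _,
        coeff_eq n j2 hj2ge]
      rw [show j2 - 1 = ℓ - m - 1 from rfl]
      ring
    · rw [if_neg hml1]
      by_cases hml : m ≤ ℓ
      · have hj20 : j2 = 0 := by omega
        rw [hj20]
        norm_num
      · rw [hc2, if_neg hml]
        ring
  have hd'pos : 0 < d' := by rw [hd'val]; exact hnum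
  have hd'ne : d' ≠ 0 := ne_of_gt hd'pos
  -- Part 1: the derivative
  have hder : HasDerivAt (fun y => F 0 y) d' 0 := by
    have hfun : (fun y => F 0 y)
        = fun y => c1 * ((p+y)^j1 - p^j1) - c2 * ((p+y)^j2 - p^j2) := by
      funext y; rw [hFeq]; norm_num
    rw [hfun]
    have hb : HasDerivAt (fun y : ℝ => p + y) 1 0 := by
      simpa using (hasDerivAt_id (0:ℝ)).const_add p
    have h1 := (((hb.pow j1).sub_const (p^j1)).const_mul c1).sub
      (((hb.pow j2).sub_const (p^j2)).const_mul c2)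
    refine h1.congr_deriv ?_
    rw [hd']
    norm_num
  constructor
  · rw [hder.deriv, hd'val]
  -- Part 2: implicit function theorem
  set Φ : ℝ × ℝ → ℝ × ℝ := fun z => (z.1, F z.1 z.2) with hΦdef
  have hΦc : ContDiff ℝ (⊤ : ℕ∞) Φ := by
    have : Φ = fun z : ℝ × ℝ => (z.1,
        c1 * ((p+z.2)^j1 * (1+z.1)^A - p^j1) - c2 * ((p+z.2)^j2 * (1+z.1)^B - p^j2)) := by
      funext z; rw [hΦdef]; simp only [hFeq]
    rw [this]
    apply contDiff_fst.prodMk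
    apply ContDiff.sub <;>
      exact contDiff_const.mul ((((contDiff_const.add contDiff_snd).pow _).mul
        ((contDiff_const.add contDiff_fst).pow _)).sub contDiff_const)
  set Kfst : ℝ × ℝ →L[ℝ] ℝ := ContinuousLinearMap.fst ℝ ℝ ℝ with hKfst
  set Ksnd : ℝ × ℝ →L[ℝ] ℝ := ContinuousLinearMap.snd ℝ ℝ ℝ with hKsnd
  set a' : ℝ := c1 * ((A:ℝ) * p^j1) - c2 * ((B:ℝ) * p^j2) with ha'
  -- the derivative of F at the origin
  have hFd : HasFDerivAt (fun z : ℝ × ℝ => F z.1 z.2) (a' • Kfst + d' • Ksnd) 0 := by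
    have hx : HasFDerivAt (fun z : ℝ × ℝ => 1 + z.1) Kfst (0 : ℝ × ℝ) :=
      hasFDerivAt_fst.const_add 1
    have hy : HasFDerivAt (fun z : ℝ × ℝ => p + z.2) Ksnd (0 : ℝ × ℝ) :=
      hasFDerivAt_snd.const_add p
    have hyj1 := (hasDerivAt_pow j1 (p + (0:ℝ×ℝ).2)).comp_hasFDerivAt (0:ℝ×ℝ) hy
    have hyj2 := (hasDerivAt_pow j2 (p + (0:ℝ×ℝ).2)).comp_hasFDerivAt (0:ℝ×ℝ) hy
    have hxA := (hasDerivAt_pow A (1 + (0:ℝ×ℝ).1)).comp_hasFDerivAt (0:ℝ×ℝ) hx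
    have hxB := (hasDerivAt_pow B (1 + (0:ℝ×ℝ).1)).comp_hasFDerivAt (0:ℝ×ℝ) hx
    have h := (((hyj1.mul hxA).sub_const (p^j1)).const_mul c1).sub
      (((hyj2.mul hxB).sub_const (p^j2)).const_mul c2)
    have hfun : (fun z : ℝ × ℝ => F z.1 z.2)
        = fun z : ℝ × ℝ => c1 * ((p+z.2)^j1 * (1+z.1)^A - p^j1)
            - c2 * ((p+z.2)^j2 * (1+z.1)^B - p^j2) := by
      funext z; rw [hFeq]
    rw [hfun]
    refine h.congr_fderiv ?_
    refine ContinuousLinearMap.ext fun v => ?_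
    simp only [ContinuousLinearMap.add_apply, ContinuousLinearMap.smul_apply,
      ContinuousLinearMap.coe_smul', Pi.smul_apply, ContinuousLinearMap.sub_apply,
      Function.comp_apply, Prod.fst_zero, Prod.snd_zero, smul_eq_mul, add_zero, one_pow,
      mul_one, ha', hd']
    ring
  have hΦd : HasFDerivAt Φ (Kfst.prod (a' • Kfst + d' • Ksnd)) 0 := HasFDerivAt.prodMk hasFDerivAt_fst hFd
  -- the derivative at the origin is invertible
  set L0 : ℝ × ℝ →L[ℝ] ℝ × ℝ := Kfst.prod (a' • Kfst + d' • Ksnd) with hL0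
  set M0 : ℝ × ℝ →L[ℝ] ℝ × ℝ := Kfst.prod ((-(a'/d')) • Kfst + (d'⁻¹) • Ksnd) with hM0
  have hleft : Function.LeftInverse M0 L0 := by
    intro z
    simp only [hL0, hM0, ContinuousLinearMap.prod_apply, ContinuousLinearMap.add_apply,
      ContinuousLinearMap.smul_apply, smul_eq_mul, hKfst, hKsnd,
      ContinuousLinearMap.coe_fst', ContinuousLinearMap.coe_snd']
    refine Prod.ext rfl ?_
    field_simp
    ring
  have hright : Function.RightInverse M0 L0 := by
    intro z
    simp only [hL0, hM0, ContinuousLinearMap.prod_apply, ContinuousLinearMap.add_apply,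
      ContinuousLinearMap.smul_apply, smul_eq_mul, hKfst, hKsnd,
      ContinuousLinearMap.coe_fst', ContinuousLinearMap.coe_snd']
    refine Prod.ext rfl ?_
    field_simp
    ring
  set e0 : (ℝ × ℝ) ≃L[ℝ] (ℝ × ℝ) := ContinuousLinearEquiv.equivOfInverse L0 M0 hleft hright
    with he0
  have he0coe : (e0 : (ℝ × ℝ) →L[ℝ] (ℝ × ℝ)) = L0 := rfl
  have hL0d : HasFDerivAt Φ (e0 : (ℝ × ℝ) →L[ℝ] (ℝ × ℝ)) 0 := by rw [he0coe]; exact hΦd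
  have hstrict : HasStrictFDerivAt Φ (e0 : (ℝ × ℝ) →L[ℝ] (ℝ × ℝ)) 0 :=
    (hΦc.contDiffAt).hasStrictFDerivAt' hL0d (by simp)
  set T := hstrict.toOpenPartialHomeomorph Φ with hT
  have hTcoe : ⇑T = Φ := rfl
  have h0src : (0 : ℝ × ℝ) ∈ T.source := hstrict.mem_toOpenPartialHomeomorph_source
  have hF00 : F 0 0 = 0 := by rw [hFeq]; ring
  have hΦ0 : Φ 0 = 0 := by
    rw [hΦdef]
    simp only [Prod.fst_zero, Prod.snd_zero, hF00]
    rfl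
  have h0tgt : (0 : ℝ × ℝ) ∈ T.target := by
    have := T.map_source h0src
    rwa [hTcoe, hΦ0] at this
  have hsymm0 : T.symm 0 = 0 := by
    have := T.left_inv h0src
    rwa [hTcoe, hΦ0] at this
  have hunit0 : IsUnit (fderiv ℝ Φ 0) := by
    rw [hL0d.fderiv]
    exact ⟨(ContinuousLinearEquiv.unitsEquiv ℝ (ℝ × ℝ)).symm e0, rfl⟩
  have hS : IsOpen {w : ℝ × ℝ | IsUnit (fderiv ℝ Φ w)} :=
    Units.isOpen.preimage (hΦc.continuous_fderiv (by simp))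
  set V : Set (ℝ × ℝ) := T.target ∩ T.symm ⁻¹' {w : ℝ × ℝ | IsUnit (fderiv ℝ Φ w)} with hV
  have hVopen : IsOpen V :=
    T.continuousOn_symm.isOpen_inter_preimage T.open_target hS
  have hV0 : (0 : ℝ × ℝ) ∈ V := by
    refine ⟨h0tgt, ?_⟩
    simp only [Set.mem_preimage, Set.mem_setOf_eq, hsymm0]
    exact hunit0
  -- smoothness of the inverse on V
  have hsymm_smooth : ∀ z ∈ V, ContDiffAt ℝ (⊤ : ℕ∞) T.symm z := by
    rintro z ⟨hzt, hzu⟩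
    have hu : IsUnit (fderiv ℝ Φ (T.symm z)) := hzu
    have hcoe : ((ContinuousLinearEquiv.unitsEquiv ℝ (ℝ × ℝ) hu.unit :
        (ℝ × ℝ) ≃L[ℝ] (ℝ × ℝ)) : (ℝ × ℝ) →L[ℝ] (ℝ × ℝ)) = fderiv ℝ Φ (T.symm z) := by
      rw [show ((ContinuousLinearEquiv.unitsEquiv ℝ (ℝ × ℝ) hu.unit :
        (ℝ × ℝ) ≃L[ℝ] (ℝ × ℝ)) : (ℝ × ℝ) →L[ℝ] (ℝ × ℝ)) = (hu.unit : (ℝ × ℝ) →L[ℝ] (ℝ × ℝ))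
        from rfl]
      exact hu.unit_spec
    refine T.contDiffAt_symm (f₀' := ContinuousLinearEquiv.unitsEquiv ℝ (ℝ × ℝ) hu.unit) hzt ?_ ?_
    · rw [hTcoe, hcoe]
      exact (hΦc.differentiable (by simp) _).hasFDerivAt
    · rw [hTcoe]
      exact hΦc.contDiffAt
  -- choose ε
  have hUopen : IsOpen {x : ℝ | ((x, (0:ℝ)) : ℝ × ℝ) ∈ V} :=
    hVopen.preimage (continuous_id.prodMk continuous_const)
  have hU0 : (0:ℝ) ∈ {x : ℝ | ((x, (0:ℝ)) : ℝ × ℝ) ∈ V} := hV0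
  obtain ⟨ε, hε, hball⟩ := Metric.isOpen_iff.1 hUopen 0 hU0
  have hIco : ∀ x ∈ Set.Ico (0:ℝ) ε, ((x, (0:ℝ)) : ℝ × ℝ) ∈ V := by
    intro x hx
    apply hball
    rw [Metric.mem_ball, Real.dist_eq, sub_zero, abs_of_nonneg hx.1]
    exact hx.2
  refine ⟨ε, hε, fun x => (T.symm (x, 0)).2, ?_, ?_, ?_⟩
  · intro x hx
    exact (ContDiffAt.comp x (contDiff_snd.contDiffAt)
      (ContDiffAt.comp x (hsymm_smooth _ (hIco x hx))
        (ContDiffAt.prodMk contDiffAt_id contDiffAt_const))).contDiffWithinAt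
  · show (T.symm ((0:ℝ), (0:ℝ))).2 = 0
    have h00 : T.symm ((0:ℝ), (0:ℝ)) = 0 := hsymm0
    rw [h00]
    rfl
  · intro x hx
    have hmem : ((x, (0:ℝ)) : ℝ × ℝ) ∈ T.target := (hIco x hx).1
    have hri := T.right_inv hmem
    rw [hTcoe] at hri
    have h1 : (T.symm (x, 0)).1 = x := congrArg Prod.fst hri
    have h2 : F (T.symm (x, 0)).1 (T.symm (x, 0)).2 = 0 := congrArg Prod.snd hri
    rw [h1] at h2
    exact h2
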